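/- arXiv:2409.00436 — 2 statements merged into one kernel-verified Lean document; each statement's English description precedes it below -/
import Mathlib

section
/- If 𝔏 is a diagonalizable Lindblad generator with eigenvalues λ₀=0, λ₁,…,λ_{d²−1} and relaxation rates Γ_ℓ = −Re λ_ℓ, then Σ_{ℓ=1}^{d²−1} Γ_ℓ = d Σ_{ℓ=1}^{d²−1} γ_ℓ, where γ_ℓ are the canonical rates with orthonormal traceless jump operators. -/
open Matrix Finset

/-!
Compute the trace of `𝔏` twice. In an eigenbasis it is `∑ ℓ, λ ℓ`. In the basis of matrix
units, the map `ρ ↦ A * ρ * B` has trace `tr A * tr B`; hence the Hamiltonian part contributes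
`d tr H - d tr H = 0`, the jump term `L ρ L†` contributes `|tr L|² = 0`, and the anticommutator
contributes `-½ (d + d) tr (L† L) = -d` per jump operator. Taking real parts gives the claim.
-/

theorem Matrix.stdBasis_repr_apply {m n R : Type*} [Fintype m] [Fintype n] [Semiring R]
    (M : Matrix m n R) (i : m) (j : n) :
    (stdBasis R m n).repr M (i, j) = M i j := by
  simp [stdBasis]

theorem LinearMap.trace_eq_sum_of_eigenbasis {ι R M : Type*} [Fintype ι] [DecidableEq ι]
    [CommRing R] [AddCommGroup M] [Module R M] (f : Module.End R M) (b : Module.Basis ι R M)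
    (μ : ι → R) (h : ∀ i, f (b i) = μ i • b i) : LinearMap.trace R M f = ∑ i, μ i := by
  simp [LinearMap.trace_eq_matrix_trace R b, Matrix.trace, LinearMap.toMatrix_apply, h]

section MatrixMultiplication

variable {n R : Type*} [Fintype n] [DecidableEq n] [CommRing R]

theorem Matrix.mul_single_one_mul_apply (A B : Matrix n n R) (i j : n) :
    (A * (single i j (1 : R) * B)) i j = A i i * B j j := by
  rw [mul_apply, sum_eq_single i (fun k _ hk => by simp [hk]) (by simp)]
  simp

theorem Matrix.trace_mulLeft_comp_mulRight (A B : Matrix n n R) :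
    LinearMap.trace R _ (LinearMap.mulLeft R A ∘ₗ LinearMap.mulRight R B) =
      A.trace * B.trace := by
  rw [LinearMap.trace_eq_matrix_trace R (stdBasis R n n)]
  simp only [trace, diag, LinearMap.toMatrix_apply, LinearMap.comp_apply,
    LinearMap.mulLeft_apply, LinearMap.mulRight_apply, stdBasis_eq_single, stdBasis_repr_apply,
    mul_single_one_mul_apply, Fintype.sum_prod_type, sum_mul_sum]

theorem Matrix.trace_mulLeft (A : Matrix n n R) :
    LinearMap.trace R _ (LinearMap.mulLeft R A) = Fintype.card n * A.trace := by
  simpa [mul_comm] using trace_mulLeft_comp_mulRight A 1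

theorem Matrix.trace_mulRight (B : Matrix n n R) :
    LinearMap.trace R _ (LinearMap.mulRight R B) = Fintype.card n * B.trace := by
  simpa using trace_mulLeft_comp_mulRight 1 B

end MatrixMultiplication

section Lindbladian

variable {n ι : Type*} [Fintype n] [DecidableEq n] [Fintype ι]

noncomputable def lindbladian (H : Matrix n n ℂ) (γ : ι → ℂ) (L : ι → Matrix n n ℂ) :
    Module.End ℂ (Matrix n n ℂ) :=
  -Complex.I • (LinearMap.mulLeft ℂ H - LinearMap.mulRight ℂ H) +
    ∑ k, γ k • (LinearMap.mulLeft ℂ (L k) ∘ₗ LinearMap.mulRight ℂ (L k)ᴴ -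
      (1 / 2 : ℂ) • (LinearMap.mulLeft ℂ ((L k)ᴴ * L k) + LinearMap.mulRight ℂ ((L k)ᴴ * L k)))

theorem trace_lindbladian (H : Matrix n n ℂ) (γ : ι → ℂ) (L : ι → Matrix n n ℂ)
    (htr : ∀ k, (L k).trace = 0) (hnorm : ∀ k, ((L k)ᴴ * L k).trace = 1) :
    LinearMap.trace ℂ _ (lindbladian H γ L) = -Fintype.card n * ∑ k, γ k := by
  simp only [lindbladian, map_add, map_sub, map_smul, map_sum, trace_mulLeft, trace_mulRight,
    trace_mulLeft_comp_mulRight, htr, hnorm, sub_self, smul_eq_mul, mul_zero, zero_add]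
  rw [mul_sum]
  exact sum_congr rfl fun k _ => by ring

end Lindbladian

/-- If `𝔏` is a diagonalizable Lindblad generator (there is a basis of
eigenvectors) with eigenvalues `μ ℓ`, `μ 0 = 0`, relaxation rates
`Γ ℓ = -Re (μ ℓ)`, and canonical rates `γ` with orthonormal traceless jump
operators, then `∑ ℓ Γ ℓ = d ∑ n γ n`. -/
theorem sum_relaxation_rates {d : ℕ}
    (H : Matrix (Fin d) (Fin d) ℂ)
    (γ : Fin (d ^ 2 - 1) → ℝ)
    (L : Fin (d ^ 2 - 1) → Matrix (Fin d) (Fin d) ℂ)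
    (horth : ∀ k l, ((L k)ᴴ * L l).trace = if k = l then 1 else 0)
    (htr : ∀ k, (L k).trace = 0)
    (𝔏 : Matrix (Fin d) (Fin d) ℂ →ₗ[ℂ] Matrix (Fin d) (Fin d) ℂ)
    (h𝔏 : ∀ ρ, 𝔏 ρ = -(Complex.I • (H * ρ - ρ * H)) +
      ∑ n, (γ n : ℂ) • (L n * ρ * (L n)ᴴ -
        (1 / 2 : ℂ) • ((L n)ᴴ * (L n) * ρ + ρ * ((L n)ᴴ * (L n)))))
    (μ : Fin (d ^ 2) → ℂ)
    (b : Module.Basis (Fin (d ^ 2)) ℂ (Matrix (Fin d) (Fin d) ℂ))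
    (heig : ∀ ℓ, 𝔏 (b ℓ) = μ ℓ • b ℓ) :
    ∑ ℓ, (-(μ ℓ).re) = d * ∑ n, γ n := by
  have h𝔏_eq : 𝔏 = lindbladian H (fun n => (γ n : ℂ)) L := by
    ext1 ρ
    simp [h𝔏, lindbladian, mul_assoc]
  have htrace : ∑ ℓ, μ ℓ = -d * ∑ n, (γ n : ℂ) := by
    rw [← LinearMap.trace_eq_sum_of_eigenbasis 𝔏 b μ heig, h𝔏_eq,
      trace_lindbladian H _ L htr (fun k => by simpa using horth k k), Fintype.card_fin]
  calc ∑ ℓ, -(μ ℓ).re = -(∑ ℓ, μ ℓ).re := by rw [Complex.re_sum, sum_neg_distrib]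
    _ = d * ∑ n, γ n := by simp [htrace, ← Complex.ofReal_sum]
end

section
/- If {f_r}_{r=1}^d is an orthonormal basis of ℂ^d and L ∈ M_d(ℂ) is expressed in an orthonormal basis of traceless matrices via a unitary change of basis with coefficients U_{n,ℓ} (row n a unit vector), then for each i, the quantity w_i = Σ_{j≠i} (|⟨f_j, L f_i⟩|² + |⟨f_j, L† f_i⟩|²) satisfies w_i ≤ Σ_ℓ |U_{n,ℓ}|² = 1. -/
open Matrix Finset

/-!
Let `U` be the unitary matrix whose columns are the `f k`, and `M = U† L U`. The summands are
`|M j i|²` and `|M i j|²` for `j ≠ i`: distinct entries of `M`, from column `i` and row `i`. Their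
sum is therefore at most the squared Frobenius norm `Tr(M† M) = Tr(L† L) = 1`.
-/

theorem Finset.sum_filter_ne_add_le_sum_sum {ι M : Type*} [Fintype ι] [DecidableEq ι]
    [AddCommMonoid M] [PartialOrder M] [IsOrderedAddMonoid M]
    (a : ι → ι → M) (ha : ∀ j k, 0 ≤ a j k) (i : ι) :
    ∑ j ∈ univ.filter (· ≠ i), (a j i + a i j) ≤ ∑ j, ∑ k, a j k := by
  have hcol : ∑ j ∈ univ.filter (· ≠ i), a j i ≤ ∑ j, a j i :=
    sum_le_sum_of_subset_of_nonneg (filter_subset _ _) fun j _ _ => ha j i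
  have hrow : ∑ k ∈ univ.filter (· ≠ i), a i k ≤ ∑ k ∈ univ.filter (· ≠ i), ∑ j, a j k :=
    sum_le_sum fun k _ => single_le_sum (f := (a · k)) (fun j _ => ha j k) (mem_univ i)
  calc ∑ j ∈ univ.filter (· ≠ i), (a j i + a i j)
      ≤ ∑ j, a j i + ∑ k ∈ univ.filter (· ≠ i), ∑ j, a j k := by
        rw [sum_add_distrib]; exact add_le_add hcol hrow
    _ = ∑ j, ∑ k, a j k := by
        rw [filter_ne', add_sum_erase univ (fun k => ∑ j, a j k) (mem_univ i), sum_comm]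

theorem Matrix.trace_conjTranspose_mul_self_eq_sum_norm_sq {m n 𝕜 : Type*} [Fintype m]
    [Fintype n] [RCLike 𝕜] (A : Matrix m n 𝕜) :
    (Aᴴ * A).trace = ((∑ i, ∑ j, ‖A i j‖ ^ 2 : ℝ) : 𝕜) := by
  rw [sum_comm]
  push_cast
  simp only [trace, diag_apply, mul_apply, conjTranspose_apply, RCLike.star_def, RCLike.conj_mul]

theorem Matrix.trace_conjTranspose_mul_self_unitary_conj {n R : Type*} [Fintype n]
    [DecidableEq n] [CommRing R] [StarRing R] {U : Matrix n n R} (hU : Uᴴ * U = 1)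
    (A : Matrix n n R) :
    ((Uᴴ * A * U)ᴴ * (Uᴴ * A * U)).trace = (Aᴴ * A).trace := by
  have hU' : U * Uᴴ = 1 := mul_eq_one_comm.mp hU
  calc ((Uᴴ * A * U)ᴴ * (Uᴴ * A * U)).trace
      = (Uᴴ * (Aᴴ * A) * U).trace := by
        simp only [conjTranspose_mul, conjTranspose_conjTranspose, Matrix.mul_assoc]
        rw [← Matrix.mul_assoc U, hU', Matrix.one_mul]
    _ = (Aᴴ * A).trace := by
        rw [trace_mul_cycle, ← Matrix.mul_assoc, hU', Matrix.one_mul]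

theorem Matrix.transpose_of_conjTranspose_mul_mul_apply {m n α : Type*} [Fintype m]
    [CommSemiring α] [StarRing α] (f : n → m → α) (A : Matrix m m α) (j k : n) :
    ((of f)ᵀᴴ * A * (of f)ᵀ) j k = star (f j) ⬝ᵥ A *ᵥ f k := by
  rw [Matrix.mul_assoc]
  rfl

theorem jump_operator_weight_le_one_general {d : ℕ} (L : Matrix (Fin d) (Fin d) ℂ)
    (hnorm : (Lᴴ * L).trace = 1)
    (f : Fin d → (Fin d → ℂ))
    (horth : ∀ j k, star (f j) ⬝ᵥ f k = if j = k then 1 else 0)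
    (i : Fin d) :
    ∑ j ∈ Finset.univ.filter (· ≠ i),
        (‖star (f j) ⬝ᵥ L.mulVec (f i)‖ ^ 2 +
          ‖star (f j) ⬝ᵥ Lᴴ.mulVec (f i)‖ ^ 2) ≤ 1 := by
  set U := (of f)ᵀ
  have hU : Uᴴ * U = 1 := by
    ext j k
    have hjk := transpose_of_conjTranspose_mul_mul_apply f 1 j k
    rw [Matrix.mul_one, one_mulVec] at hjk
    rw [hjk, horth, one_apply]
  set M := Uᴴ * L * U
  have hM : ∑ j, ∑ k, ‖M j k‖ ^ 2 = 1 :=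
    Complex.ofReal_eq_one.mp <| (trace_conjTranspose_mul_self_eq_sum_norm_sq M).symm.trans
      ((trace_conjTranspose_mul_self_unitary_conj hU L).trans hnorm)
  have hL (j : Fin d) : star (f j) ⬝ᵥ L *ᵥ f i = M j i :=
    (transpose_of_conjTranspose_mul_mul_apply f L j i).symm
  have hLH (j : Fin d) : star (f j) ⬝ᵥ Lᴴ *ᵥ f i = star (M i j) := by
    rw [← transpose_of_conjTranspose_mul_mul_apply, ← conjTranspose_apply]
    simp only [M, conjTranspose_mul, conjTranspose_conjTranspose, Matrix.mul_assoc]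
    rfl
  simp_rw [hL, hLH, norm_star]
  exact hM ▸ sum_filter_ne_add_le_sum_sum (fun j k => ‖M j k‖ ^ 2) (fun _ _ => by positivity) i

/-- If `L ∈ M_d(ℂ)` is traceless with `Tr(L†L) = 1`, then for every orthonormal
basis `{f 1, …, f d}` of `ℂ^d` and every index `i`,
`∑_{j ≠ i} (|⟨f j, L (f i)⟩|² + |⟨f j, L† (f i)⟩|²) ≤ 1`. -/
theorem jump_operator_weight_le_one {d : ℕ} (L : Matrix (Fin d) (Fin d) ℂ)
    (htr : L.trace = 0) (hnorm : (Lᴴ * L).trace = 1)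
    (f : Fin d → (Fin d → ℂ))
    (horth : ∀ j k, star (f j) ⬝ᵥ f k = if j = k then 1 else 0)
    (i : Fin d) :
    ∑ j ∈ Finset.univ.filter (· ≠ i),
        (‖star (f j) ⬝ᵥ L.mulVec (f i)‖ ^ 2 +
          ‖star (f j) ⬝ᵥ Lᴴ.mulVec (f i)‖ ^ 2) ≤ 1 :=
  jump_operator_weight_le_one_general L hnorm f horth i
end
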